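/- The four Markovian joint spectral radius variants coincide: limsup_n ρ^{(per)}_n(𝒜,Ω) = limsup_n ρ^{(∞)}_n(𝒜,Ω) = limsup_n ρ_n(𝒜,Ω) = limsup_n ρ^{(0)}_n(𝒜,Ω), assuming the Markovian Berger–Wang equality limsup_n ρ̂^{(per)}_n(𝒜,Ω) = limsup_n ρ_n(𝒜,Ω) (Dai's theorem). -/

import Mathlib

open Matrix Filter
open scoped Kronecker

/-- `seqProd A n = A (n-1) * ⋯ * A 1 * A 0`. -/
def seqProd {α : Type*} [Monoid α] (A : ℕ → α) (n : ℕ) : α :=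
  ((List.range n).reverse.map A).prod

/-- The matrix `Ω_i = ω_i^T δ_i`: outer product of the `i`-th column of `ω`
with the `i`-th standard basis row vector. -/
def OmegaM {N : ℕ} (ω : Matrix (Fin N) (Fin N) ℂ) (i : Fin N) :
    Matrix (Fin N) (Fin N) ℂ :=
  vecMulVec (fun j => ω j i) (fun k => if k = i then 1 else 0)

/-- Ω-admissibility of the finite sequence `i 0, …, i (n-1)`. -/
def Adm {N : ℕ} (ω : Matrix (Fin N) (Fin N) ℂ) (i : ℕ → Fin N) (n : ℕ) : Prop :=
  (∀ k, k + 1 < n → ω (i (k + 1)) (i k) = 1) ∧ ∃ j, ω j (i (n - 1)) = 1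

/-- Ω-admissible and periodically extendable. -/
def PerAdm {N : ℕ} (ω : Matrix (Fin N) (Fin N) ℂ) (i : ℕ → Fin N) (n : ℕ) : Prop :=
  Adm ω i n ∧ ω (i 0) (i (n - 1)) = 1

/-- Only the consecutive-transition condition (the set `W⁰`). -/
def AdmZero {N : ℕ} (ω : Matrix (Fin N) (Fin N) ℂ) (i : ℕ → Fin N) (n : ℕ) : Prop :=
  ∀ k, k + 1 < n → ω (i (k + 1)) (i k) = 1

/-- Extendability to an infinite admissible sequence (the set `W^∞`). -/
def AdmInf {N : ℕ} (ω : Matrix (Fin N) (Fin N) ℂ) (i : ℕ → Fin N) (n : ℕ) : Prop :=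
  ∃ j : ℕ → Fin N, (∀ k, k < n → j k = i k) ∧ ∀ k, ω (j (k + 1)) (j k) = 1

/-- The norm `|||M||| = max_i Σ_j ‖m_{ij}‖` on `N × N` block matrices with `d × d` blocks. -/
noncomputable def blockNorm {N d : ℕ} (nrm : Matrix (Fin d) (Fin d) ℂ → ℝ)
    (M : Matrix (Fin N × Fin d) (Fin N × Fin d) ℂ) : ℝ :=
  ⨆ i : Fin N, ∑ j : Fin N, nrm (Matrix.of fun a b => M (i, a) (j, b))

/-- The lifted matrix `A^{(i)} = Ω_i ⊗ A_i`. -/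
def liftA {N d : ℕ} (ω : Matrix (Fin N) (Fin N) ℂ)
    (A : Fin N → Matrix (Fin d) (Fin d) ℂ) (i : Fin N) :
    Matrix (Fin N × Fin d) (Fin N × Fin d) ℂ :=
  OmegaM ω i ⊗ₖ A i

/-- Spectral radius of a complex matrix, as a real number. -/
noncomputable def sprad {m : Type*} [Fintype m] [DecidableEq m] (M : Matrix m m ℂ) : ℝ :=
  (spectralRadius ℂ M).toReal

/-- `ρ_n(𝒜, Ω)`. -/
noncomputable def rhoMark {N d : ℕ} (nrm : Matrix (Fin d) (Fin d) ℂ → ℝ)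
    (ω : Matrix (Fin N) (Fin N) ℂ) (A : Fin N → Matrix (Fin d) (Fin d) ℂ) (n : ℕ) : ℝ :=
  sSup {x : ℝ | ∃ i : ℕ → Fin N, Adm ω i n ∧
    x = nrm (seqProd (fun k => A (i k)) n) ^ ((1 : ℝ) / n)}

/-- `ρ^{(per)}_n(𝒜, Ω)`. -/
noncomputable def rhoPerMark {N d : ℕ} (nrm : Matrix (Fin d) (Fin d) ℂ → ℝ)
    (ω : Matrix (Fin N) (Fin N) ℂ) (A : Fin N → Matrix (Fin d) (Fin d) ℂ) (n : ℕ) : ℝ :=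
  sSup {x : ℝ | ∃ i : ℕ → Fin N, PerAdm ω i n ∧
    x = nrm (seqProd (fun k => A (i k)) n) ^ ((1 : ℝ) / n)}

/-- `ρ^{(0)}_n(𝒜, Ω)`. -/
noncomputable def rhoZeroMark {N d : ℕ} (nrm : Matrix (Fin d) (Fin d) ℂ → ℝ)
    (ω : Matrix (Fin N) (Fin N) ℂ) (A : Fin N → Matrix (Fin d) (Fin d) ℂ) (n : ℕ) : ℝ :=
  sSup {x : ℝ | ∃ i : ℕ → Fin N, AdmZero ω i n ∧
    x = nrm (seqProd (fun k => A (i k)) n) ^ ((1 : ℝ) / n)}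

/-- `ρ^{(∞)}_n(𝒜, Ω)`. -/
noncomputable def rhoInfMark {N d : ℕ} (nrm : Matrix (Fin d) (Fin d) ℂ → ℝ)
    (ω : Matrix (Fin N) (Fin N) ℂ) (A : Fin N → Matrix (Fin d) (Fin d) ℂ) (n : ℕ) : ℝ :=
  sSup {x : ℝ | ∃ i : ℕ → Fin N, AdmInf ω i n ∧
    x = nrm (seqProd (fun k => A (i k)) n) ^ ((1 : ℝ) / n)}

/-- `ρ̂_n(𝒜, Ω)`. -/
noncomputable def rhoHatMark {N d : ℕ} (ω : Matrix (Fin N) (Fin N) ℂ)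
    (A : Fin N → Matrix (Fin d) (Fin d) ℂ) (n : ℕ) : ℝ :=
  sSup {x : ℝ | ∃ i : ℕ → Fin N, Adm ω i n ∧
    x = sprad (seqProd (fun k => A (i k)) n) ^ ((1 : ℝ) / n)}

/-- `ρ̂^{(per)}_n(𝒜, Ω)`. -/
noncomputable def rhoHatPerMark {N d : ℕ} (ω : Matrix (Fin N) (Fin N) ℂ)
    (A : Fin N → Matrix (Fin d) (Fin d) ℂ) (n : ℕ) : ℝ :=
  sSup {x : ℝ | ∃ i : ℕ → Fin N, PerAdm ω i n ∧
    x = sprad (seqProd (fun k => A (i k)) n) ^ ((1 : ℝ) / n)}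

/-!
Pointwise, `ρ̂^{(per)}_n ≤ ρ^{(per)}_n ≤ ρ^{(∞)}_n ≤ ρ_n ≤ ρ^{(0)}_n`: the spectral radius is
dominated by any submultiplicative norm (test the norm on a matrix whose columns are an
eigenvector), and the word classes are nested (a periodically extendable word extends
periodically). With Dai's equality the limsups up to `ρ_n` coincide. Conversely, dropping the
last letter of a `W⁰`-word leaves an admissible word, so
`ρ^{(0)}_{n+1} ≤ α^{1/(n+1)} ρ_n^{n/(n+1)}` with `α ≥ max ‖A_i‖`, and the limsup of the
right-hand side is at most `limsup ρ_n`.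
-/

open scoped Topology

lemma seqProd_succ {α : Type*} [Monoid α] (A : ℕ → α) (n : ℕ) :
    seqProd A (n + 1) = A n * seqProd A n := by
  simp [seqProd, List.range_succ]

section RhoOver

variable {M ι : Type*} [Monoid M] (f : M → ℝ) (A : ι → M)

/-- `P i n` reads: the word `i 0, …, i (n-1)` lies in the class. Each `ρ`-variant is
definitionally `rhoOver` of its word class (`Adm ω`, `PerAdm ω`, …). -/
noncomputable def rhoOver (P : (ℕ → ι) → ℕ → Prop) (n : ℕ) : ℝ :=
  sSup {x : ℝ | ∃ i : ℕ → ι, P i n ∧ x = f (seqProd (fun k => A (i k)) n) ^ ((1 : ℝ) / n)}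

variable {f A}

lemma rhoOver_nonneg (hf0 : ∀ x, 0 ≤ f x) (P : (ℕ → ι) → ℕ → Prop) (n : ℕ) :
    0 ≤ rhoOver f A P n :=
  Real.sSup_nonneg <| by rintro x ⟨i, -, rfl⟩; exact Real.rpow_nonneg (hf0 _) _

lemma rhoOver_le_of_forall_le {P : (ℕ → ι) → ℕ → Prop} {n : ℕ} {c : ℝ} (hc : 0 ≤ c)
    (h : ∀ i, P i n → f (seqProd (fun k => A (i k)) n) ^ ((1 : ℝ) / n) ≤ c) :
    rhoOver f A P n ≤ c :=
  Real.sSup_le (by rintro x ⟨i, hi, rfl⟩; exact h i hi) hc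

lemma le_rhoOver {P : (ℕ → ι) → ℕ → Prop} {n : ℕ} {c : ℝ}
    (hc : ∀ i : ℕ → ι, f (seqProd (fun k => A (i k)) n) ^ ((1 : ℝ) / n) ≤ c)
    {i : ℕ → ι} (hi : P i n) :
    f (seqProd (fun k => A (i k)) n) ^ ((1 : ℝ) / n) ≤ rhoOver f A P n :=
  le_csSup ⟨c, by rintro x ⟨j, -, rfl⟩; exact hc j⟩ ⟨i, hi, rfl⟩

lemma rhoOver_mono {g : M → ℝ} {P Q : (ℕ → ι) → ℕ → Prop} {n : ℕ} {c : ℝ}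
    (hf0 : ∀ x, 0 ≤ f x) (hfg : ∀ x, f x ≤ g x)
    (hc : ∀ i : ℕ → ι, g (seqProd (fun k => A (i k)) n) ^ ((1 : ℝ) / n) ≤ c)
    (hPQ : ∀ i, P i n → Q i n) :
    rhoOver f A P n ≤ rhoOver g A Q n :=
  rhoOver_le_of_forall_le (rhoOver_nonneg (fun x => (hf0 x).trans (hfg x)) Q n) fun i hi =>
    (Real.rpow_le_rpow (hf0 _) (hfg _) (by positivity)).trans (le_rhoOver hc (hPQ i hi))

lemma apply_seqProd_le_pow {α : ℝ} (hf0 : ∀ x, 0 ≤ f x) (hmul : ∀ x y, f (x * y) ≤ f x * f y)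
    (hA : ∀ j, f (A j) ≤ α) (i : ℕ → ι) {n : ℕ} (hn : n ≠ 0) :
    f (seqProd (fun k => A (i k)) n) ≤ α ^ n := by
  obtain ⟨n, rfl⟩ := Nat.exists_eq_succ_of_ne_zero hn
  induction n with
  | zero => simpa [seqProd] using hA (i 0)
  | succ n ih =>
    rw [seqProd_succ, pow_succ']
    exact (hmul _ _).trans <|
      mul_le_mul (hA _) (ih n.succ_ne_zero) (hf0 _) ((hf0 (A (i 0))).trans (hA _))

lemma rpow_apply_seqProd_le {α : ℝ} (hf0 : ∀ x, 0 ≤ f x)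
    (hmul : ∀ x y, f (x * y) ≤ f x * f y) (hA : ∀ j, f (A j) ≤ α) (hα : 1 ≤ α)
    (i : ℕ → ι) (n : ℕ) :
    f (seqProd (fun k => A (i k)) n) ^ ((1 : ℝ) / n) ≤ α := by
  rcases eq_or_ne n 0 with rfl | hn
  · simpa using hα
  calc f (seqProd (fun k => A (i k)) n) ^ ((1 : ℝ) / n)
      ≤ (α ^ n) ^ ((1 : ℝ) / n) :=
        Real.rpow_le_rpow (hf0 _) (apply_seqProd_le_pow hf0 hmul hA i hn) (by positivity)
    _ = α := by rw [one_div, Real.pow_rpow_inv_natCast (by linarith) hn]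

lemma rhoOver_succ_le {α C : ℝ} {P Q : (ℕ → ι) → ℕ → Prop} {n : ℕ} (hn : n ≠ 0)
    (hf0 : ∀ x, 0 ≤ f x) (hmul : ∀ x y, f (x * y) ≤ f x * f y) (hA : ∀ j, f (A j) ≤ α)
    (hα : 0 ≤ α) (hC : ∀ i : ℕ → ι, f (seqProd (fun k => A (i k)) n) ^ ((1 : ℝ) / n) ≤ C)
    (hQP : ∀ i, Q i (n + 1) → P i n) :
    rhoOver f A Q (n + 1) ≤
      α ^ (1 / (n + 1 : ℝ)) * rhoOver f A P n ^ ((n : ℝ) / (n + 1)) := by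
  have hρ := rhoOver_nonneg (A := A) hf0 P n
  refine rhoOver_le_of_forall_le (by positivity) fun i hi => ?_
  set x := f (seqProd (fun k => A (i k)) n)
  have hx : 0 ≤ x := hf0 _
  have hlast : f (seqProd (fun k => A (i k)) (n + 1)) ≤ α * x := by
    rw [seqProd_succ]
    exact (hmul _ _).trans (mul_le_mul_of_nonneg_right (hA _) hx)
  push_cast
  calc f (seqProd (fun k => A (i k)) (n + 1)) ^ (1 / (n + 1 : ℝ))
      ≤ (α * x) ^ (1 / (n + 1 : ℝ)) := Real.rpow_le_rpow (hf0 _) hlast (by positivity)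
    _ = α ^ (1 / (n + 1 : ℝ)) * (x ^ ((1 : ℝ) / n)) ^ ((n : ℝ) / (n + 1)) := by
      rw [Real.mul_rpow hα hx, ← Real.rpow_mul hx]
      congr 2
      field_simp
    _ ≤ α ^ (1 / (n + 1 : ℝ)) * rhoOver f A P n ^ ((n : ℝ) / (n + 1)) := by
      gcongr
      exact le_rhoOver hC (hQP i hi)

end RhoOver

lemma limsup_le_limsup_of_nonneg_of_le {u v : ℕ → ℝ} {C : ℝ} (hu : ∀ n, 0 ≤ u n)
    (hv : ∀ n, v n ≤ C) (huv : ∀ᶠ n in atTop, u n ≤ v n) :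
    limsup u atTop ≤ limsup v atTop :=
  limsup_le_limsup huv (isCoboundedUnder_le_of_le atTop hu) (isBoundedUnder_of ⟨C, hv⟩)

lemma limsup_le_of_eventually_succ_le {u v : ℕ → ℝ} {α C : ℝ} (hα : 0 < α)
    (hu0 : ∀ n, 0 ≤ u n) (huC : ∀ n, u n ≤ C) (hv0 : ∀ n, 0 ≤ v n)
    (huv : ∀ᶠ n in atTop, v (n + 1) ≤ α ^ (1 / (n + 1 : ℝ)) * u n ^ ((n : ℝ) / (n + 1))) :
    limsup v atTop ≤ limsup u atTop := by
  have hu_bdd : IsBoundedUnder (· ≤ ·) atTop u := isBoundedUnder_of ⟨C, huC⟩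
  have hL : 0 ≤ limsup u atTop :=
    le_limsup_of_frequently_le (Eventually.of_forall hu0).frequently hu_bdd
  refine le_of_forall_gt_imp_ge_of_dense fun c hc => ?_
  obtain ⟨c', hLc', hc'c⟩ := exists_between hc
  have hc' : 0 < c' := hL.trans_lt hLc'
  have hlim : Tendsto (fun n : ℕ => α ^ (1 / (n + 1 : ℝ)) * c' ^ ((n : ℝ) / (n + 1))) atTop
      (𝓝 c') := by
    simpa using (tendsto_const_nhds.rpow tendsto_one_div_add_atTop_nhds_zero_nat
      (Or.inl hα.ne')).mul (tendsto_const_nhds.rpow (tendsto_natCast_div_add_atTop 1)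
      (Or.inl hc'.ne'))
  rw [← limsup_nat_add v 1]
  refine limsup_le_of_le (isCoboundedUnder_le_of_le atTop fun n => hv0 (n + 1)) ?_
  filter_upwards [huv, eventually_lt_of_limsup_lt hLc' hu_bdd,
    hlim.eventually (gt_mem_nhds hc'c)] with n hvn hun hlimn
  calc v (n + 1) ≤ α ^ (1 / (n + 1 : ℝ)) * u n ^ ((n : ℝ) / (n + 1)) := hvn
    _ ≤ α ^ (1 / (n + 1 : ℝ)) * c' ^ ((n : ℝ) / (n + 1)) := by gcongr; exact hu0 n
    _ ≤ c := hlimn.le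

lemma norm_le_of_mem_spectrum {K n : Type*} [NormedField K] [Fintype n] [DecidableEq n]
    {f : Matrix n n K → ℝ} (hf0 : ∀ M, 0 ≤ f M) (hdef : ∀ M, f M = 0 ↔ M = 0)
    (hsmul : ∀ (c : K) M, f (c • M) = ‖c‖ * f M) (hmul : ∀ M₁ M₂, f (M₁ * M₂) ≤ f M₁ * f M₂)
    {M : Matrix n n K} {k : K} (hk : k ∈ spectrum K M) : ‖k‖ ≤ f M := by
  obtain ⟨v, hv⟩ := (Module.End.HasEigenvalue.of_mem_spectrum
    (by rwa [Matrix.spectrum_toLin'] : k ∈ spectrum K M.toLin')).exists_hasEigenvector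
  set V := Matrix.replicateCol n v
  have hMV : M * V = k • V := by
    rw [← Matrix.replicateCol_mulVec, ← Matrix.toLin'_apply, hv.apply_eq_smul,
      Matrix.replicateCol_smul]
  have hV : 0 < f V := by
    refine (hf0 V).lt_of_ne' fun h => hv.2 ?_
    funext j
    exact congr_fun₂ ((hdef V).1 h) j j
  refine le_of_mul_le_mul_right ?_ hV
  calc ‖k‖ * f V = f (M * V) := by rw [hMV, hsmul]
    _ ≤ f M * f V := hmul M V

lemma sprad_nonneg {m : Type*} [Fintype m] [DecidableEq m] (M : Matrix m m ℂ) : 0 ≤ sprad M :=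
  ENNReal.toReal_nonneg

lemma sprad_le {m : Type*} [Fintype m] [DecidableEq m] {f : Matrix m m ℂ → ℝ}
    (hf0 : ∀ M, 0 ≤ f M) (hdef : ∀ M, f M = 0 ↔ M = 0)
    (hsmul : ∀ (c : ℂ) M, f (c • M) = ‖c‖ * f M) (hmul : ∀ M₁ M₂, f (M₁ * M₂) ≤ f M₁ * f M₂)
    (M : Matrix m m ℂ) : sprad M ≤ f M := by
  refine ENNReal.toReal_le_of_le_ofReal (hf0 M) (iSup₂_le fun k hk => ?_)
  rw [← ENNReal.ofReal_coe_nnreal, coe_nnnorm]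
  exact ENNReal.ofReal_le_ofReal (norm_le_of_mem_spectrum hf0 hdef hsmul hmul hk)

section Markov

variable {N d : ℕ} {ω : Matrix (Fin N) (Fin N) ℂ} {i : ℕ → Fin N} {n : ℕ}

theorem PerAdm.admInf (hn : n ≠ 0) (h : PerAdm ω i n) : AdmInf ω i n := by
  refine ⟨fun k => i (k % n), fun k hk => congrArg i (Nat.mod_eq_of_lt hk), fun k => ?_⟩
  have hk : k % n < n := Nat.mod_lt _ (Nat.pos_of_ne_zero hn)
  show ω (i ((k + 1) % n)) (i (k % n)) = 1
  rw [← Nat.mod_add_mod]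
  rcases (show k % n + 1 ≤ n by omega).lt_or_eq with hlt | heq
  · rw [Nat.mod_eq_of_lt hlt]
    exact h.1.1 _ hlt
  · rw [heq, Nat.mod_self, show k % n = n - 1 by omega]
    exact h.2

theorem AdmInf.adm (hn : n ≠ 0) (h : AdmInf ω i n) : Adm ω i n := by
  obtain ⟨j, hji, hj⟩ := h
  refine ⟨fun k hk => ?_, j n, ?_⟩
  · rw [← hji (k + 1) hk, ← hji k (by omega)]
    exact hj k
  · rw [← hji (n - 1) (by omega)]
    simpa [Nat.sub_add_cancel (Nat.one_le_iff_ne_zero.2 hn)] using hj (n - 1)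

theorem AdmZero.adm_of_succ (hn : n ≠ 0) (h : AdmZero ω i (n + 1)) : Adm ω i n :=
  ⟨fun k hk => h k (by omega), i n, by
    simpa [Nat.sub_add_cancel (Nat.one_le_iff_ne_zero.2 hn)] using h (n - 1) (by omega)⟩

variable {nrm : Matrix (Fin d) (Fin d) ℂ → ℝ} {A : Fin N → Matrix (Fin d) (Fin d) ℂ} {α : ℝ}

lemma rhoHatPerMark_le_rhoPerMark (hnn : ∀ M, 0 ≤ nrm M) (hdef : ∀ M, nrm M = 0 ↔ M = 0)
    (hsmul : ∀ (c : ℂ) M, nrm (c • M) = ‖c‖ * nrm M)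
    (hmul : ∀ M₁ M₂, nrm (M₁ * M₂) ≤ nrm M₁ * nrm M₂)
    (hroot : ∀ (i : ℕ → Fin N) n, nrm (seqProd (fun k => A (i k)) n) ^ ((1 : ℝ) / n) ≤ α)
    (n : ℕ) : rhoHatPerMark ω A n ≤ rhoPerMark nrm ω A n :=
  rhoOver_mono sprad_nonneg (sprad_le hnn hdef hsmul hmul) (hroot · n) fun _ => id

lemma rhoPerMark_le_rhoInfMark (hnn : ∀ M, 0 ≤ nrm M)
    (hroot : ∀ (i : ℕ → Fin N) n, nrm (seqProd (fun k => A (i k)) n) ^ ((1 : ℝ) / n) ≤ α)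
    (hn : n ≠ 0) : rhoPerMark nrm ω A n ≤ rhoInfMark nrm ω A n :=
  rhoOver_mono hnn (fun _ => le_rfl) (hroot · n) fun _ => PerAdm.admInf hn

lemma rhoInfMark_le_rhoMark (hnn : ∀ M, 0 ≤ nrm M)
    (hroot : ∀ (i : ℕ → Fin N) n, nrm (seqProd (fun k => A (i k)) n) ^ ((1 : ℝ) / n) ≤ α)
    (hn : n ≠ 0) : rhoInfMark nrm ω A n ≤ rhoMark nrm ω A n :=
  rhoOver_mono hnn (fun _ => le_rfl) (hroot · n) fun _ => AdmInf.adm hn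

lemma rhoMark_le_rhoZeroMark (hnn : ∀ M, 0 ≤ nrm M)
    (hroot : ∀ (i : ℕ → Fin N) n, nrm (seqProd (fun k => A (i k)) n) ^ ((1 : ℝ) / n) ≤ α)
    (n : ℕ) : rhoMark nrm ω A n ≤ rhoZeroMark nrm ω A n :=
  rhoOver_mono hnn (fun _ => le_rfl) (hroot · n) fun _ => And.left

lemma rhoZeroMark_succ_le (hnn : ∀ M, 0 ≤ nrm M)
    (hmul : ∀ M₁ M₂, nrm (M₁ * M₂) ≤ nrm M₁ * nrm M₂) (hA : ∀ j, nrm (A j) ≤ α) (hα : 0 ≤ α)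
    (hroot : ∀ (i : ℕ → Fin N) n, nrm (seqProd (fun k => A (i k)) n) ^ ((1 : ℝ) / n) ≤ α)
    (hn : n ≠ 0) :
    rhoZeroMark nrm ω A (n + 1) ≤
      α ^ (1 / (n + 1 : ℝ)) * rhoMark nrm ω A n ^ ((n : ℝ) / (n + 1)) :=
  rhoOver_succ_le hn hnn hmul hA hα (hroot · n) fun _ => AdmZero.adm_of_succ hn

end Markov

theorem stmt15_general {N d : ℕ} (ω : Matrix (Fin N) (Fin N) ℂ)
    (nrm : Matrix (Fin d) (Fin d) ℂ → ℝ)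
    (hnn : ∀ M, 0 ≤ nrm M) (hdef : ∀ M, nrm M = 0 ↔ M = 0)
    (hsmul : ∀ (c : ℂ) M, nrm (c • M) = ‖c‖ * nrm M)
    (hmul : ∀ M₁ M₂, nrm (M₁ * M₂) ≤ nrm M₁ * nrm M₂)
    (A : Fin N → Matrix (Fin d) (Fin d) ℂ)
    (hDai : Filter.limsup (fun n => rhoHatPerMark ω A n) Filter.atTop =
      Filter.limsup (fun n => rhoMark nrm ω A n) Filter.atTop) :
    Filter.limsup (fun n => rhoPerMark nrm ω A n) Filter.atTop =
        Filter.limsup (fun n => rhoMark nrm ω A n) Filter.atTop ∧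
      Filter.limsup (fun n => rhoInfMark nrm ω A n) Filter.atTop =
        Filter.limsup (fun n => rhoMark nrm ω A n) Filter.atTop ∧
      Filter.limsup (fun n => rhoZeroMark nrm ω A n) Filter.atTop =
        Filter.limsup (fun n => rhoMark nrm ω A n) Filter.atTop := by
  obtain ⟨C, hC⟩ := Finite.exists_le fun j => nrm (A j)
  obtain ⟨α, hα1, hA⟩ : ∃ α, 1 ≤ α ∧ ∀ j, nrm (A j) ≤ α :=
    ⟨max 1 C, le_max_left _ _, fun j => (hC j).trans (le_max_right _ _)⟩
  have hα : 0 < α := zero_lt_one.trans_le hα1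
  have hroot := rpow_apply_seqProd_le hnn hmul hA hα1
  have h0 : ∀ P n, 0 ≤ rhoOver nrm A P n := rhoOver_nonneg hnn
  have hle : ∀ P n, rhoOver nrm A P n ≤ α := fun P n =>
    rhoOver_le_of_forall_le hα.le fun i _ => hroot i n
  have hn0 : ∀ᶠ n : ℕ in atTop, n ≠ 0 := eventually_ne_atTop 0
  have hper_inf : limsup (rhoPerMark nrm ω A) atTop ≤ limsup (rhoInfMark nrm ω A) atTop :=
    limsup_le_limsup_of_nonneg_of_le (h0 _) (hle _)
      (hn0.mono fun _ => rhoPerMark_le_rhoInfMark hnn hroot)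
  have hinf : limsup (rhoInfMark nrm ω A) atTop ≤ limsup (rhoMark nrm ω A) atTop :=
    limsup_le_limsup_of_nonneg_of_le (h0 _) (hle _)
      (hn0.mono fun _ => rhoInfMark_le_rhoMark hnn hroot)
  have hper : limsup (rhoMark nrm ω A) atTop ≤ limsup (rhoPerMark nrm ω A) atTop :=
    hDai ▸ limsup_le_limsup_of_nonneg_of_le (rhoOver_nonneg sprad_nonneg _) (hle _)
      (.of_forall (rhoHatPerMark_le_rhoPerMark hnn hdef hsmul hmul hroot))
  have hzero_ge : limsup (rhoMark nrm ω A) atTop ≤ limsup (rhoZeroMark nrm ω A) atTop :=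
    limsup_le_limsup_of_nonneg_of_le (h0 _) (hle _)
      (.of_forall (rhoMark_le_rhoZeroMark hnn hroot))
  have hzero_le : limsup (rhoZeroMark nrm ω A) atTop ≤ limsup (rhoMark nrm ω A) atTop :=
    limsup_le_of_eventually_succ_le hα (h0 _) (hle _) (h0 _)
      (hn0.mono fun _ => rhoZeroMark_succ_le hnn hmul hA hα.le hroot)
  exact ⟨(hper_inf.trans hinf).antisymm hper, hinf.antisymm (hper.trans hper_inf),
    hzero_le.antisymm hzero_ge⟩

theorem stmt15 {N d : ℕ} (ω : Matrix (Fin N) (Fin N) ℂ)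
    (hω : ∀ a b, ω a b = 0 ∨ ω a b = 1) (nrm : Matrix (Fin d) (Fin d) ℂ → ℝ)
    (hnn : ∀ M, 0 ≤ nrm M) (hdef : ∀ M, nrm M = 0 ↔ M = 0)
    (hadd : ∀ M₁ M₂, nrm (M₁ + M₂) ≤ nrm M₁ + nrm M₂)
    (hsmul : ∀ (c : ℂ) M, nrm (c • M) = ‖c‖ * nrm M)
    (hmul : ∀ M₁ M₂, nrm (M₁ * M₂) ≤ nrm M₁ * nrm M₂)
    (A : Fin N → Matrix (Fin d) (Fin d) ℂ)
    (hDai : Filter.limsup (fun n => rhoHatPerMark ω A n) Filter.atTop =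
      Filter.limsup (fun n => rhoMark nrm ω A n) Filter.atTop) :
    Filter.limsup (fun n => rhoPerMark nrm ω A n) Filter.atTop =
        Filter.limsup (fun n => rhoMark nrm ω A n) Filter.atTop ∧
      Filter.limsup (fun n => rhoInfMark nrm ω A n) Filter.atTop =
        Filter.limsup (fun n => rhoMark nrm ω A n) Filter.atTop ∧
      Filter.limsup (fun n => rhoZeroMark nrm ω A n) Filter.atTop =
        Filter.limsup (fun n => rhoMark nrm ω A n) Filter.atTop :=
  stmt15_general ω nrm hnn hdef hsmul hmul A hDai
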